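/- Let B be a Hermitian 3×3 complex matrix, let Θ = Θ(0,0,0,B) (the 6×6 block matrix with B in the lower-left 3×3 block and zeros elsewhere), let X, Y be Hermitian 3×3 complex matrices, and let p, q ∈ ℝ. Then the symplectic action of Θ on P(X,Y,p,q) gives Θ·P(X,Y,p,q) = P(2·B*Y, pB, 0, tr(B∘X)). (Action of a null translation of the second kind.) -/

import Mathlib

open Matrix BigOperators

/-- 3×3 complex matrices. -/
abbrev Mat3 := Matrix (Fin 3) (Fin 3) ℂ

/-- Sign of an integer, valued in ℤ. -/
def sgnZ (n : ℤ) : ℤ := if 0 < n then 1 else if n < 0 then -1 else 0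

/-- The Levi-Civita symbol on `Fin 3`. -/
def eps (a b c : Fin 3) : ℤ :=
  sgnZ ((b : ℤ) - (a : ℤ)) * sgnZ ((c : ℤ) - (a : ℤ)) * sgnZ ((c : ℤ) - (b : ℤ))

/-- The cubie of a 3×3 matrix: (*X)_{abc} = X_a^m ε_{mbc}. -/
noncomputable def cubie (X : Mat3) (a b c : Fin 3) : ℂ :=
  ∑ m, X a m * ((eps m b c : ℤ) : ℂ)

/-- The Jordan product X∘Y = (XY+YX)/2. -/
noncomputable def jord (X Y : Mat3) : Mat3 := (1/2 : ℂ) • (X * Y + Y * X)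

/-- The Freudenthal product. -/
noncomputable def freud (X Y : Mat3) : Mat3 :=
  jord X Y - (1/2 : ℂ) • (X.trace • Y + Y.trace • X)
    + (1/2 : ℂ) • (X.trace * Y.trace - (jord X Y).trace) • (1 : Mat3)

/-- Reduce an index in {1,...,6} to an index in {1,2,3}: for a "large" index
(value ≥ 4, i.e. `Fin 6` value ≥ 3) this is a−3; "small" indices are unchanged. -/
def lo (a : Fin 6) : Fin 3 := ⟨a.val % 3, Nat.mod_lt _ (by norm_num)⟩

/-- The totally antisymmetric rank-3 tensor P(X,Y,p,q) on indices in {1,...,6}: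
its 000 cubie is p·ε, its 100 cubie is *Y, its 011 cubie is *X, its 111 cubie
is q·ε, and all other components are determined by total antisymmetry
(using that (*X)_{abc} is antisymmetric in its last two indices). -/
noncomputable def PT (X Y : Mat3) (p q : ℂ) : Fin 6 → Fin 6 → Fin 6 → ℂ := fun a b c =>
  if a.val < 3 then
    if b.val < 3 then
      if c.val < 3 then p * ((eps (lo a) (lo b) (lo c) : ℤ) : ℂ)  -- (s,s,s)
      else cubie Y (lo c) (lo a) (lo b)                            -- (s,s,l) = +P_{cab}
    else
      if c.val < 3 then -(cubie Y (lo b) (lo a) (lo c))            -- (s,l,s) = −P_{bac}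
      else cubie X (lo a) (lo b) (lo c)                            -- (s,l,l)
  else
    if b.val < 3 then
      if c.val < 3 then cubie Y (lo a) (lo b) (lo c)               -- (l,s,s)
      else -(cubie X (lo b) (lo a) (lo c))                         -- (l,s,l) = −P_{bac}
    else
      if c.val < 3 then cubie X (lo c) (lo a) (lo b)               -- (l,l,s) = +P_{cab}
      else q * ((eps (lo a) (lo b) (lo c) : ℤ) : ℂ)                -- (l,l,l)

/-- The action of a 6×6 matrix Θ on a rank-3 tensor:
(Θ·P)_{abc} = Θ_a^m P_{mbc} + Θ_b^m P_{amc} + Θ_c^m P_{abm}. -/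
noncomputable def act (Θ : Matrix (Fin 6) (Fin 6) ℂ) (P : Fin 6 → Fin 6 → Fin 6 → ℂ) :
    Fin 6 → Fin 6 → Fin 6 → ℂ := fun a b c =>
  (∑ m, Θ a m * P m b c) + (∑ m, Θ b m * P a m c) + (∑ m, Θ c m * P a b m)

/-- The 6×6 block matrix Θ(φ,ρ,A,B) = [[φ − (ρ/3)I, A],[B, −φ† + (ρ/3)I]]. -/
noncomputable def ThetaM (φ : Mat3) (ρ : ℝ) (A B : Mat3) : Matrix (Fin 6) (Fin 6) ℂ :=
  Matrix.reindex finSumFinEquiv finSumFinEquiv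
    (Matrix.fromBlocks (φ - ((ρ : ℂ)/3) • 1) A B (-φᴴ + ((ρ : ℂ)/3) • 1))

/-!
The block Θ(0,0,0,B) only sends "large" indices 4,5,6 to "small" ones 1,2,3, so every component
of Θ·P lowers one large index of P through B. Hence the q·ε part is lost, the p·ε part becomes
*(pB), the *Y part becomes 2·*(B*Y) by a polarised adjugate identity for 3×3 matrices, and the *X
part becomes tr(BX)·ε because gl(3) acts on ε through the trace.
-/

lemma eps_swap_left (a b c : Fin 3) : eps b a c = -eps a b c := by
  revert a b c; decide

lemma eps_swap_right (a b c : Fin 3) : eps a c b = -eps a b c := by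
  revert a b c; decide

lemma eps_rotate (a b c : Fin 3) : eps a b c = eps c a b := by
  revert a b c; decide

lemma cubie_swap (X : Mat3) (a b c : Fin 3) : cubie X a c b = -cubie X a b c := by
  simp only [cubie, eps_swap_right _ b c, Int.cast_neg, mul_neg, Finset.sum_neg_distrib]

lemma cubie_eq_sum_three (X : Mat3) (a b c : Fin 3) :
    cubie X a b c = X a 0 * eps 0 b c + X a 1 * eps 1 b c + X a 2 * eps 2 b c :=
  Fin.sum_univ_three _

lemma sum_mul_smul_eps (r : ℂ) (B : Mat3) (a b c : Fin 3) :
    ∑ m, B a m * (r * eps m b c) = cubie (r • B) a b c := by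
  simp only [cubie, Matrix.smul_apply, smul_eq_mul]
  exact Finset.sum_congr rfl fun m _ => by ring

lemma sum_mul_cubie (B X : Mat3) (a b c : Fin 3) :
    ∑ m, B a m * cubie X m b c = cubie (B * X) a b c := by
  simp only [cubie, mul_apply, Finset.mul_sum, Finset.sum_mul, mul_assoc]
  exact Finset.sum_comm

lemma cubie_sub_cubie_add_cubie (M : Mat3) (a b c : Fin 3) :
    cubie M a b c - cubie M b a c + cubie M c a b = M.trace * eps a b c := by
  simp only [cubie_eq_sum_three, trace, diag, Fin.sum_univ_three]
  fin_cases a <;> fin_cases b <;> fin_cases c <;> simp [eps, sgnZ] <;> ring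

lemma two_mul_freud_apply (B Y : Mat3) (i j : Fin 3) :
    2 * freud B Y i j = (B * Y + Y * B) i j - B.trace * Y i j - Y.trace * B i j
      + (B.trace * Y.trace - (B * Y).trace) * (1 : Mat3) i j := by
  simp only [freud, jord, Matrix.add_apply, Matrix.sub_apply, Matrix.smul_apply, smul_eq_mul,
    trace_smul, trace_add, trace_mul_comm Y B]
  ring

lemma trace_jord (X Y : Mat3) : (jord X Y).trace = (X * Y).trace := by
  rw [jord, trace_smul, trace_add, trace_mul_comm Y X, smul_eq_mul]
  ring

lemma sum_mul_cubie_sub_eq_cubie_freud (B Y : Mat3) (a b c : Fin 3) :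
    ∑ m, (B b m * cubie Y a m c - B a m * cubie Y b m c) = cubie ((2 : ℂ) • freud B Y) c a b := by
  simp only [cubie_eq_sum_three, Matrix.smul_apply, smul_eq_mul, Fin.sum_univ_three, mul_add,
    ← mul_assoc, two_mul_freud_apply, trace, diag, Matrix.add_apply, mul_apply, one_apply]
  fin_cases a <;> fin_cases b <;> fin_cases c <;>
    simp [eps, sgnZ] <;> ring

section ThetaM

variable (φ : Mat3) (ρ : ℝ) (A B : Mat3) (i j : Fin 3)

lemma ThetaM_castAdd_castAdd :
    ThetaM φ ρ A B (Fin.castAdd 3 i) (Fin.castAdd 3 j) = (φ - ((ρ : ℂ) / 3) • 1) i j :=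
  congrArg₂ (fromBlocks _ A B _) (finSumFinEquiv_symm_apply_castAdd i)
    (finSumFinEquiv_symm_apply_castAdd j)

lemma ThetaM_castAdd_natAdd : ThetaM φ ρ A B (Fin.castAdd 3 i) (Fin.natAdd 3 j) = A i j :=
  congrArg₂ (fromBlocks _ A B _) (finSumFinEquiv_symm_apply_castAdd i)
    (finSumFinEquiv_symm_apply_natAdd j)

lemma ThetaM_natAdd_castAdd : ThetaM φ ρ A B (Fin.natAdd 3 i) (Fin.castAdd 3 j) = B i j :=
  congrArg₂ (fromBlocks _ A B _) (finSumFinEquiv_symm_apply_natAdd i)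
    (finSumFinEquiv_symm_apply_castAdd j)

lemma ThetaM_natAdd_natAdd :
    ThetaM φ ρ A B (Fin.natAdd 3 i) (Fin.natAdd 3 j) = (-φᴴ + ((ρ : ℂ) / 3) • 1) i j :=
  congrArg₂ (fromBlocks _ A B _) (finSumFinEquiv_symm_apply_natAdd i)
    (finSumFinEquiv_symm_apply_natAdd j)

end ThetaM

lemma sum_ThetaM_castAdd_mul (B : Mat3) (i : Fin 3) (f : Fin 6 → ℂ) :
    ∑ m, ThetaM 0 0 0 B (Fin.castAdd 3 i) m * f m = 0 := by
  rw [Fin.sum_univ_add (a := 3) (b := 3)]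
  simp only [ThetaM_castAdd_castAdd, ThetaM_castAdd_natAdd]
  simp

lemma sum_ThetaM_natAdd_mul (B : Mat3) (i : Fin 3) (f : Fin 6 → ℂ) :
    ∑ m, ThetaM 0 0 0 B (Fin.natAdd 3 i) m * f m = ∑ j, B i j * f (Fin.castAdd 3 j) := by
  rw [Fin.sum_univ_add (a := 3) (b := 3)]
  simp only [ThetaM_natAdd_castAdd, ThetaM_natAdd_natAdd]
  simp

lemma lo_castAdd (i : Fin 3) : lo (Fin.castAdd 3 i) = i := by
  ext; simp [lo]

lemma lo_natAdd (i : Fin 3) : lo (Fin.natAdd 3 i) = i := by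
  ext; simp [lo]

lemma exists_castAdd_or_natAdd {m n : ℕ} (a : Fin (m + n)) :
    (∃ i, Fin.castAdd n i = a) ∨ ∃ i, Fin.natAdd m i = a :=
  Fin.addCases (motive := fun a => (∃ i, Fin.castAdd n i = a) ∨ ∃ i, Fin.natAdd m i = a)
    (fun i => .inl ⟨i, rfl⟩) (fun i => .inr ⟨i, rfl⟩) a

theorem stmt6_general (B : Mat3) (X Y : Mat3) (p q : ℝ) :
    act (ThetaM 0 0 0 B) (PT X Y (p : ℂ) (q : ℂ))
      = PT ((2 : ℂ) • freud B Y) ((p : ℂ) • B) 0 ((jord B X).trace) := by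
  funext a b c
  obtain ⟨i, rfl⟩ | ⟨i, rfl⟩ := exists_castAdd_or_natAdd (m := 3) (n := 3) a <;>
    obtain ⟨j, rfl⟩ | ⟨j, rfl⟩ := exists_castAdd_or_natAdd (m := 3) (n := 3) b <;>
    obtain ⟨k, rfl⟩ | ⟨k, rfl⟩ := exists_castAdd_or_natAdd (m := 3) (n := 3) c <;>
    simp only [act, sum_ThetaM_castAdd_mul, sum_ThetaM_natAdd_mul, PT, Fin.val_castAdd,
      Fin.val_natAdd, Fin.is_lt, add_lt_iff_neg_left, Nat.not_lt_zero, if_true, if_false,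
      lo_castAdd, lo_natAdd]
  -- index patterns sss, ssl, sls, sll, lss, lsl, lls, lll (s: in 1..3, l: in 4..6)
  · simp
  · simp only [zero_add, eps_rotate i j, sum_mul_smul_eps]
  · simp only [zero_add, add_zero, eps_swap_left _ i k, Int.cast_neg, mul_neg,
      Finset.sum_neg_distrib, sum_mul_smul_eps]
  · rw [← sum_mul_cubie_sub_eq_cubie_freud]
    simp only [cubie_swap Y _ i, mul_neg, Finset.sum_neg_distrib, Finset.sum_sub_distrib]
    ring
  · simp only [add_zero, sum_mul_smul_eps]
  · rw [← sum_mul_cubie_sub_eq_cubie_freud]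
    simp only [cubie_swap Y _ j, mul_neg, Finset.sum_neg_distrib, Finset.sum_sub_distrib]
    ring
  · rw [← sum_mul_cubie_sub_eq_cubie_freud]
    simp only [mul_neg, Finset.sum_neg_distrib, Finset.sum_sub_distrib]
    ring
  · simp only [mul_neg, Finset.sum_neg_distrib, sum_mul_cubie, trace_jord,
      ← cubie_sub_cubie_add_cubie]
    ring

/-- the null translation Θ(0,0,0,B), with B Hermitian, acts on
P(X,Y,p,q) (X, Y Hermitian, p, q real) by Θ·P(X,Y,p,q) = P(2·B*Y, pB, 0, tr(B∘X)). -/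
theorem stmt6 (B : Mat3) (hB : Bᴴ = B) (X Y : Mat3) (hX : Xᴴ = X) (hY : Yᴴ = Y)
    (p q : ℝ) :
    act (ThetaM 0 0 0 B) (PT X Y (p : ℂ) (q : ℂ))
      = PT ((2 : ℂ) • freud B Y) ((p : ℂ) • B) 0 ((jord B X).trace) :=
  stmt6_general B X Y p q
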